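/- arXiv:1912.12270 — 3 statements merged into one kernel-verified Lean document; each statement's English description precedes it below -/
import Mathlib

section
/- Under the Dense Dataset assumption and the Similarity Classifier Smoothness assumption, if the ground-truth class of detection D is O_j with j ≠ i, and template image I_{i,m} satisfies ∃T ∈ T^R with d(T(I_{i,m}), D) ≤ γ, then c(I_{i,m}, D) < max_n c(I_{j,n}, D) + δ (so the Similar Object Comparison test rejects I_{i,m}). -/
/-- Action of a pixel permutation on an image. -/
def act {P C : Type*} (σ : Equiv.Perm P) (x : P → C) : P → C :=
  fun p => x (σ.symm p)

lemma act_mul {P C : Type*} (σ τ : Equiv.Perm P) (x : P → C) :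
    act σ (act τ x) = act (σ * τ) x := rfl

lemma act_inv_act {P C : Type*} (σ : Equiv.Perm P) (x : P → C) :
    act σ⁻¹ (act σ x) = x := by
  funext p; simp [act, Equiv.Perm.inv_def]

/-- Similar object comparison rejection: if the ground-truth class of `D` is `O j`
with `j ≠ i`, and template `I_{i,m}` is within `γ` of `D` up to a rigid transform,
then `c (I_{i,m}) D < max_n c (I_{j,n}) D + δ`. -/
theorem stmt4 {P C K : Type*}
    {M : K → Type*} [∀ k, Fintype (M k)] [∀ k, Nonempty (M k)]
    (d : (P → C) → (P → C) → ℝ)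
    (htri : ∀ x y z, d x z ≤ d x y + d y z)
    (hsymm : ∀ x y, d x y = d y x)
    (hperm : ∀ (σ : Equiv.Perm P) (x y : P → C), d (act σ x) (act σ y) = d x y)
    (TR : Set (Equiv.Perm P))
    (hmul : ∀ σ τ : Equiv.Perm P, σ ∈ TR → τ ∈ TR → σ * τ ∈ TR)
    (hinv : ∀ σ : Equiv.Perm P, σ ∈ TR → σ⁻¹ ∈ TR)
    (c : (P → C) → (P → C) → ℝ) (γ δ : ℝ)
    (tmpl : (k : K) → M k → (P → C))
    (hsmooth : ∀ (I₁ I₂ D : P → C),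
      (∃ T ∈ TR, d (act T I₁) I₂ ≤ 2 * γ) → |c I₁ D - c I₂ D| < δ)
    (i j : K) (hij : j ≠ i) (D : P → C)
    (hdense : ∃ n : M j, ∃ T ∈ TR, d (act T (tmpl j n)) D ≤ γ)
    (m : M i) (hm : ∃ T ∈ TR, d (act T (tmpl i m)) D ≤ γ) :
    c (tmpl i m) D <
      (Finset.univ.sup' Finset.univ_nonempty fun n : M j => c (tmpl j n) D) + δ := by
  obtain ⟨n, Tj, hTj, hdj⟩ := hdense
  obtain ⟨T, hT, hdm⟩ := hm
  have hclose : d (act (Tj⁻¹ * T) (tmpl i m)) (tmpl j n) ≤ 2 * γ := by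
    have h1 : d (act T (tmpl i m)) (act Tj (tmpl j n)) ≤ 2 * γ := by
      calc d (act T (tmpl i m)) (act Tj (tmpl j n))
          ≤ d (act T (tmpl i m)) D + d D (act Tj (tmpl j n)) := htri _ _ _
        _ ≤ γ + γ := by
            have := hsymm D (act Tj (tmpl j n))
            linarith [hdj, hdm, this.ge]
        _ = 2 * γ := by ring
    calc d (act (Tj⁻¹ * T) (tmpl i m)) (tmpl j n)
        = d (act Tj⁻¹ (act T (tmpl i m))) (act Tj⁻¹ (act Tj (tmpl j n))) := by
          rw [act_mul, act_inv_act]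
      _ = d (act T (tmpl i m)) (act Tj (tmpl j n)) := hperm _ _ _
      _ ≤ 2 * γ := h1
  have hsm := hsmooth (tmpl i m) (tmpl j n) D
    ⟨Tj⁻¹ * T, hmul _ _ (hinv _ hTj) hT, hclose⟩
  have hle : c (tmpl j n) D ≤
      Finset.univ.sup' Finset.univ_nonempty fun n : M j => c (tmpl j n) D :=
    Finset.le_sup' (fun n : M j => c (tmpl j n) D) (Finset.mem_univ n)
  have := abs_lt.mp hsm
  linarith [this.2]
end

section
/- 1 − IoU is a metric on nonempty finite sets: for finite nonempty sets A, B, C, the Jaccard distance d_J(A,B) = 1 − |A∩B|/|A∪B| satisfies the triangle inequality d_J(A,C) ≤ d_J(A,B) + d_J(B,C). -/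
lemma jac_poly (a b c p q r t : ℝ) (ha : 0 ≤ a) (hb : 0 ≤ b) (hc : 0 ≤ c)
    (hp : 0 ≤ p) (hq : 0 ≤ q) (hr : 0 ≤ r) (ht : 0 ≤ t) :
    (p+t)*((b+c+p+q+r+t)*(a+c+p+q+r+t)) + (r+t)*((a+b+p+q+r+t)*(a+c+p+q+r+t))
      ≤ (a+b+p+q+r+t)*((b+c+p+q+r+t)*(a+c+p+q+r+t)) + (q+t)*((a+b+p+q+r+t)*(b+c+p+q+r+t)) := by
  have hE : (0:ℝ) ≤ a*a*b + a*a*c + a*a*p + a*a*q + a*b*b + 2*a*b*c + 2*a*b*p + 4*a*b*q + 2*a*b*r + 2*a*b*t + a*c*c + 2*a*c*p + 4*a*c*q + 2*a*c*r + 2*a*c*t + a*p*p + 4*a*p*q + a*p*r + a*p*t + 3*a*q*q + 3*a*q*r + 3*a*q*t + b*b*c + b*b*p + 2*b*b*q + b*b*r + 2*b*b*t + b*c*c + 2*b*c*p + 4*b*c*q + 2*b*c*r + 2*b*c*t + b*p*p + 5*b*p*q + 2*b*p*r + 3*b*p*t + 4*b*q*q + 5*b*q*r + 6*b*q*t + b*r*r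 + 3*b*r*t + 2*b*t*t + c*c*q + c*c*r + 3*c*p*q + c*p*r + 3*c*q*q + 4*c*q*r + 3*c*q*t + c*r*r + c*r*t + 2*p*p*q + 4*p*q*q + 4*p*q*r + 4*p*q*t + 2*q*q*q + 4*q*q*r + 4*q*q*t + 2*q*r*r + 4*q*r*t + 2*q*t*t := by positivity
  linarith [hE, (by ring : (a+b+p+q+r+t)*((b+c+p+q+r+t)*(a+c+p+q+r+t)) + (q+t)*((a+b+p+q+r+t)*(b+c+p+q+r+t)) - ((p+t)*((b+c+p+q+r+t)*(a+c+p+q+r+t)) + (r+t)*((a+b+p+q+r+t)*(a+c+p+q+r+t))) = a*a*b + a*a*c + a*a*p + a*a*q + a*b*b + 2*a*b*c + 2*a*b*p + 4*a*b*q + 2*a*b*r + 2*a*b*t + a*c*c + 2*a*c*p + 4*a*c*q + 2*a*c*r + 2*a*c*t + a*p*p + 4*a*p*q + a*p*r + a*p*t + 3*a*q*q + 3*a*q*r + 3*a*q*t + b*b*c + b*b*p + 2*b*b*q + b*b*r + 2*b*b*t + b*c*c + 2*b*c*p + 4*b*c*q + 2*b*c*r + 2*b*c*t + b*p*p + 5*b*p*q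 + 2*b*p*r + 3*b*p*t + 4*b*q*q + 5*b*q*r + 6*b*q*t + b*r*r + 3*b*r*t + 2*b*t*t + c*c*q + c*c*r + 3*c*p*q + c*p*r + 3*c*q*q + 4*c*q*r + 3*c*q*t + c*r*r + c*r*t + 2*p*p*q + 4*p*q*q + 4*p*q*r + 4*p*q*t + 2*q*q*q + 4*q*q*r + 4*q*q*t + 2*q*r*r + 4*q*r*t + 2*q*t*t)]

lemma jac_div (a b c p q r t : ℝ) (ha : 0 ≤ a) (hb : 0 ≤ b) (hc : 0 ≤ c)
    (hp : 0 ≤ p) (hq : 0 ≤ q) (hr : 0 ≤ r) (ht : 0 ≤ t)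
    (hAB : 0 < a+b+p+q+r+t) (hBC : 0 < b+c+p+q+r+t) (hAC : 0 < a+c+p+q+r+t) :
    (p+t)/(a+b+p+q+r+t) + (r+t)/(b+c+p+q+r+t) ≤ 1 + (q+t)/(a+c+p+q+r+t) := by
  rw [← sub_nonneg]
  have expand : 1 + (q+t)/(a+c+p+q+r+t) - ((p+t)/(a+b+p+q+r+t) + (r+t)/(b+c+p+q+r+t))
      = (((a+b+p+q+r+t)*((b+c+p+q+r+t)*(a+c+p+q+r+t)) + (q+t)*((a+b+p+q+r+t)*(b+c+p+q+r+t)))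
         - ((p+t)*((b+c+p+q+r+t)*(a+c+p+q+r+t)) + (r+t)*((a+b+p+q+r+t)*(a+c+p+q+r+t))))
        / ((a+b+p+q+r+t)*((b+c+p+q+r+t)*(a+c+p+q+r+t))) := by
    field_simp
  rw [expand]
  apply div_nonneg _ (by positivity)
  linarith [jac_poly a b c p q r t ha hb hc hp hq hr ht]

/-- Intersection-over-Union of two finite pixel sets. -/
noncomputable def IoU {α : Type*} [DecidableEq α] (A B : Finset α) : ℝ :=
  ((A ∩ B).card : ℝ) / (A ∪ B).card

/-- The Jaccard distance `1 − IoU` satisfies the triangle inequality on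
nonempty finite sets. -/
theorem stmt17 {α : Type*} [DecidableEq α] (A B C : Finset α)
    (hA : A.Nonempty) (hB : B.Nonempty) (hC : C.Nonempty) :
    1 - IoU A C ≤ (1 - IoU A B) + (1 - IoU B C) := by
  have hiAB : ((A∩B)\C).card + (A∩B∩C).card = (A∩B).card := by
    have e1 : (A∩B)\(A∩B∩C) = (A∩B)\C := by ext x; simp only [Finset.mem_sdiff, Finset.mem_inter, Finset.mem_union]; tauto
    have e2 : (A∩B)∪(A∩B∩C) = A∩B := by ext x; simp only [Finset.mem_sdiff, Finset.mem_inter, Finset.mem_union]; tauto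
    have := Finset.card_sdiff_add_card (A∩B) (A∩B∩C); rw [e1, e2] at this; exact this
  have hiAC : ((A∩C)\B).card + (A∩B∩C).card = (A∩C).card := by
    have e1 : (A∩C)\(A∩B∩C) = (A∩C)\B := by ext x; simp only [Finset.mem_sdiff, Finset.mem_inter, Finset.mem_union]; tauto
    have e2 : (A∩C)∪(A∩B∩C) = A∩C := by ext x; simp only [Finset.mem_sdiff, Finset.mem_inter, Finset.mem_union]; tauto
    have := Finset.card_sdiff_add_card (A∩C) (A∩B∩C)
    rw [e1, e2] at this; exact this
  have hiBC : ((B∩C)\A).card + (A∩B∩C).card = (B∩C).card := by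
    have e1 : (B∩C)\(A∩B∩C) = (B∩C)\A := by ext x; simp only [Finset.mem_sdiff, Finset.mem_inter, Finset.mem_union]; tauto
    have e2 : (B∩C)∪(A∩B∩C) = B∩C := by ext x; simp only [Finset.mem_sdiff, Finset.mem_inter, Finset.mem_union]; tauto
    have := Finset.card_sdiff_add_card (B∩C) (A∩B∩C)
    rw [e1, e2] at this; exact this
  -- B split
  have hBsplit : (B\(A∪C)).card + (B∩(A∪C)).card = B.card := by
    have e1 : B\(B∩(A∪C)) = B\(A∪C) := by ext x; simp only [Finset.mem_sdiff, Finset.mem_inter, Finset.mem_union]; tauto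
    have e2 : B∪(B∩(A∪C)) = B := by ext x; simp only [Finset.mem_sdiff, Finset.mem_inter, Finset.mem_union]; tauto
    have := Finset.card_sdiff_add_card B (B∩(A∪C))
    rw [e1, e2] at this; exact this
  have hBint : (B∩(A∪C)).card + (A∩B∩C).card = (A∩B).card + (B∩C).card := by
    have e1 : (A∩B)∪(B∩C) = B∩(A∪C) := by ext x; simp only [Finset.mem_sdiff, Finset.mem_inter, Finset.mem_union]; tauto
    have e2 : (A∩B)∩(B∩C) = A∩B∩C := by ext x; simp only [Finset.mem_sdiff, Finset.mem_inter, Finset.mem_union]; tauto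
    have := Finset.card_union_add_card_inter (A∩B) (B∩C)
    rw [e1, e2] at this; exact this
  -- C \ B split
  have hCB : (C\(A∪B)).card + ((A∩C)\B).card = (C\B).card := by
    have e1 : (C\B)\((A∩C)\B) = C\(A∪B) := by ext x; simp only [Finset.mem_sdiff, Finset.mem_inter, Finset.mem_union]; tauto
    have e2 : (C\B)∪((A∩C)\B) = C\B := by ext x; simp only [Finset.mem_sdiff, Finset.mem_inter, Finset.mem_union]; tauto
    have := Finset.card_sdiff_add_card (C\B) ((A∩C)\B)
    rw [e1, e2] at this; exact this
  have huBC : (C\B).card + B.card = (B∪C).card := by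
    have := Finset.card_sdiff_add_card C B
    rw [Finset.union_comm] at this; exact this
  -- total S relations
  have hSb : (B\(A∪C)).card + (A∪C).card = (A∪B∪C).card := by
    have e : B∪(A∪C) = A∪B∪C := by ext x; simp only [Finset.mem_sdiff, Finset.mem_inter, Finset.mem_union]; tauto
    have := Finset.card_sdiff_add_card B (A∪C)
    rw [e] at this; exact this
  have hSc : (C\(A∪B)).card + (A∪B).card = (A∪B∪C).card := by
    have e : C∪(A∪B) = A∪B∪C := by ext x; simp only [Finset.mem_sdiff, Finset.mem_inter, Finset.mem_union]; tauto
    have := Finset.card_sdiff_add_card C (A∪B)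
    rw [e] at this; exact this
  have hSa : (A\(B∪C)).card + (B∪C).card = (A∪B∪C).card := by
    have e : A∪(B∪C) = A∪B∪C := by ext x; simp only [Finset.mem_sdiff, Finset.mem_inter, Finset.mem_union]; tauto
    have := Finset.card_sdiff_add_card A (B∪C)
    rw [e] at this; exact this
  -- cast all identities to ℝ
  have RiAB : (((A∩B)\C).card:ℝ) + ((A∩B∩C).card:ℝ) = ((A∩B).card:ℝ) := by exact_mod_cast hiAB
  have RiAC : (((A∩C)\B).card:ℝ) + ((A∩B∩C).card:ℝ) = ((A∩C).card:ℝ) := by exact_mod_cast hiAC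
  have RiBC : (((B∩C)\A).card:ℝ) + ((A∩B∩C).card:ℝ) = ((B∩C).card:ℝ) := by exact_mod_cast hiBC
  have RBsplit : ((B\(A∪C)).card:ℝ) + ((B∩(A∪C)).card:ℝ) = (B.card:ℝ) := by exact_mod_cast hBsplit
  have RBint : ((B∩(A∪C)).card:ℝ) + ((A∩B∩C).card:ℝ) = ((A∩B).card:ℝ) + ((B∩C).card:ℝ) := by
    exact_mod_cast hBint
  have RCB : ((C\(A∪B)).card:ℝ) + (((A∩C)\B).card:ℝ) = ((C\B).card:ℝ) := by exact_mod_cast hCB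
  have RuBC : ((C\B).card:ℝ) + (B.card:ℝ) = ((B∪C).card:ℝ) := by exact_mod_cast huBC
  have RSb : ((B\(A∪C)).card:ℝ) + ((A∪C).card:ℝ) = ((A∪B∪C).card:ℝ) := by exact_mod_cast hSb
  have RSc : ((C\(A∪B)).card:ℝ) + ((A∪B).card:ℝ) = ((A∪B∪C).card:ℝ) := by exact_mod_cast hSc
  have RSa : ((A\(B∪C)).card:ℝ) + ((B∪C).card:ℝ) = ((A∪B∪C).card:ℝ) := by exact_mod_cast hSa
  -- union cards in terms of atoms
  have rAB : ((A∪B).card:ℝ) = ((A\(B∪C)).card:ℝ)+((B\(A∪C)).card:ℝ)+(((A∩B)\C).card:ℝ)+(((A∩C)\B).card:ℝ)+(((B∩C)\A).card:ℝ)+((A∩B∩C).card:ℝ) := by linarith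
  have rBC : ((B∪C).card:ℝ) = ((B\(A∪C)).card:ℝ)+((C\(A∪B)).card:ℝ)+(((A∩B)\C).card:ℝ)+(((A∩C)\B).card:ℝ)+(((B∩C)\A).card:ℝ)+((A∩B∩C).card:ℝ) := by linarith
  have rAC : ((A∪C).card:ℝ) = ((A\(B∪C)).card:ℝ)+((C\(A∪B)).card:ℝ)+(((A∩B)\C).card:ℝ)+(((A∩C)\B).card:ℝ)+(((B∩C)\A).card:ℝ)+((A∩B∩C).card:ℝ) := by linarith
  -- positivity of denominators
  have hABpos : (0:ℝ) < ((A∪B).card:ℝ) := by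
    exact_mod_cast Finset.card_pos.mpr ⟨hA.choose, Finset.mem_union_left _ hA.choose_spec⟩
  have hBCpos : (0:ℝ) < ((B∪C).card:ℝ) := by
    exact_mod_cast Finset.card_pos.mpr ⟨hB.choose, Finset.mem_union_left _ hB.choose_spec⟩
  have hACpos : (0:ℝ) < ((A∪C).card:ℝ) := by
    exact_mod_cast Finset.card_pos.mpr ⟨hA.choose, Finset.mem_union_left _ hA.choose_spec⟩
  have key := jac_div ((A\(B∪C)).card:ℝ) ((B\(A∪C)).card:ℝ) ((C\(A∪B)).card:ℝ) (((A∩B)\C).card:ℝ) (((A∩C)\B).card:ℝ) (((B∩C)\A).card:ℝ) ((A∩B∩C).card:ℝ)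
    (Nat.cast_nonneg _) (Nat.cast_nonneg _) (Nat.cast_nonneg _) (Nat.cast_nonneg _)
    (Nat.cast_nonneg _) (Nat.cast_nonneg _) (Nat.cast_nonneg _)
    (by linarith) (by linarith) (by linarith)
  have gAB : IoU A B = ((((A∩B)\C).card:ℝ) + ((A∩B∩C).card:ℝ))/(((A\(B∪C)).card:ℝ)+((B\(A∪C)).card:ℝ)+(((A∩B)\C).card:ℝ)+(((A∩C)\B).card:ℝ)+(((B∩C)\A).card:ℝ)+((A∩B∩C).card:ℝ)) := by rw [IoU, RiAB, rAB]
  have gBC : IoU B C = ((((B∩C)\A).card:ℝ) + ((A∩B∩C).card:ℝ))/(((B\(A∪C)).card:ℝ)+((C\(A∪B)).card:ℝ)+(((A∩B)\C).card:ℝ)+(((A∩C)\B).card:ℝ)+(((B∩C)\A).card:ℝ)+((A∩B∩C).card:ℝ)) := by rw [IoU, RiBC, rBC]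
  have gAC : IoU A C = ((((A∩C)\B).card:ℝ) + ((A∩B∩C).card:ℝ))/(((A\(B∪C)).card:ℝ)+((C\(A∪B)).card:ℝ)+(((A∩B)\C).card:ℝ)+(((A∩C)\B).card:ℝ)+(((B∩C)\A).card:ℝ)+((A∩B∩C).card:ℝ)) := by rw [IoU, RiAC, rAC]
  rw [gAB, gBC, gAC]
  linarith [key]
end

section
/- Perfect precision of the verified detector: defining the verified detector's output as Accept(i, D) := (base detector proposes class i for D) ∧ TheoreticalFlowVerify(i, D), under the Dense Dataset and Smoothness assumptions, every accepted detection is a true positive: Accept(i, D) → gt(D) = O_i; equivalently, the precision (true positives / accepted) of the verified detector equals 1 whenever at least one detection is accepted. -/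
/-- Perfect precision of the verified detector: every detection accepted by
`Accept (i, D) := (base D = i) ∧ TheoreticalFlowVerify (i, D)` is a true
positive, i.e. `gt D = i`. -/
theorem stmt19 {P C K : Type*}
    {M : K → Type*} [∀ k, Fintype (M k)] [∀ k, Nonempty (M k)]
    (d : (P → C) → (P → C) → ℝ)
    (htri : ∀ x y z, d x z ≤ d x y + d y z)
    (hsymm : ∀ x y, d x y = d y x)
    (hperm : ∀ (σ : Equiv.Perm P) (x y : P → C), d (act σ x) (act σ y) = d x y)
    (TR : Set (Equiv.Perm P))
    (hmul : ∀ σ τ : Equiv.Perm P, σ ∈ TR → τ ∈ TR → σ * τ ∈ TR)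
    (hinv : ∀ σ : Equiv.Perm P, σ ∈ TR → σ⁻¹ ∈ TR)
    (c : (P → C) → (P → C) → ℝ) (γ δ : ℝ)
    (r : Equiv.Perm P → ℝ)
    (hr : ∀ T, r T = 1 ↔ T ∈ TR)
    (tmpl : (k : K) → M k → (P → C))
    (F : (k : K) → M k → (P → C) → Equiv.Perm P)
    (gt base : (P → C) → K)
    (hdense : ∀ D : P → C, ∃ n : M (gt D), ∃ T ∈ TR, d (act T (tmpl (gt D) n)) D ≤ γ)
    (hsmooth : ∀ (I₁ I₂ D' : P → C),
      (∃ T ∈ TR, d (act T I₁) I₂ ≤ 2 * γ) → |c I₁ D' - c I₂ D'| < δ)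
    (i : K) (D : P → C)
    (haccept : base D = i ∧
      ∃ m : M i,
        (∀ j : K, j ≠ i → ∀ n : M j, c (tmpl j n) D + δ ≤ c (tmpl i m) D) ∧
        d (act (F i m D) (tmpl i m)) D ≤ γ ∧
        r (F i m D) = 1) :
    gt D = i := by
  by_contra hne
  obtain ⟨hbase, m, hmargin, hdist, hrig⟩ := haccept
  obtain ⟨n, T, hT, hdn⟩ := hdense D
  have hF : F i m D ∈ TR := (hr _).mp hrig
  -- d (act F tmpl_i) (act T tmpl_gt) ≤ 2γ
  have h2 : d (act (F i m D) (tmpl i m)) (act T (tmpl (gt D) n)) ≤ 2 * γ := by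
    have := htri (act (F i m D) (tmpl i m)) D (act T (tmpl (gt D) n))
    have h3 : d D (act T (tmpl (gt D) n)) ≤ γ := by rw [hsymm]; exact hdn
    linarith
  have hact : ∀ (σ τ : Equiv.Perm P) (x : P → C), act σ (act τ x) = act (σ * τ) x := by
    intro σ τ x; funext p; simp [act, Equiv.Perm.mul_def, Equiv.symm_trans_apply]
  have key : d (act (T⁻¹ * F i m D) (tmpl i m)) (tmpl (gt D) n) ≤ 2 * γ := by
    have := hperm T⁻¹ (act (F i m D) (tmpl i m)) (act T (tmpl (gt D) n))
    rw [hact, hact] at this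
    simp only [inv_mul_cancel] at this
    have hone : act (1 : Equiv.Perm P) (tmpl (gt D) n) = tmpl (gt D) n := by
      funext p; simp [act, Equiv.Perm.one_def]
    rw [hone] at this
    rw [this]; exact h2
  have hTR : T⁻¹ * F i m D ∈ TR := hmul _ _ (hinv _ hT) hF
  have hsm := hsmooth (tmpl i m) (tmpl (gt D) n) D ⟨_, hTR, key⟩
  have hm := hmargin (gt D) (fun h => hne h) n
  rw [abs_sub_lt_iff] at hsm
  linarith [hsm.1]
end
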